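/- arXiv:2006.16190 — 2 statements merged into one kernel-verified Lean document; each statement's English description precedes it below -/
import Mathlib

section
/- Let D=(V∪R,A) be a digraph in which every vertex r∈R has in-degree 0. Then there exists a set of pairwise arc-disjoint arborescences {B_r}_{r∈R}, where each B_r is rooted at r and spans exactly the set of vertices reachable from r in D, if and only if for every X⊆V∪R with X∩V≠∅ we have d_A^-(X) ≥ |P_X^D ∩ R| − |X ∩ R|, where P_X^D denotes the set of vertices from which at least one vertex of X is reachable in D. -/
open Set

/-- One step along an arc of `B` in the digraph given by tail/head maps. -/
def stepOn {α β : Type} (tl hd : β → α) (B : Set β) (u v : α) : Prop :=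
  ∃ a ∈ B, tl a = u ∧ hd a = v

/-- Reachability using only arcs of `B`. -/
def reachOn {α β : Type} (tl hd : β → α) (B : Set β) (u v : α) : Prop :=
  Relation.ReflTransGen (stepOn tl hd B) u v

/-- The vertex set of the arc set `B` together with the root `r`. -/
def vertsOf {α β : Type} (tl hd : β → α) (B : Set β) (r : α) : Set α :=
  insert r (tl '' B ∪ hd '' B)

/-- `B` is an `r`-arborescence: no arc enters the root, every other vertex of `B`
has exactly one entering arc, and every vertex of `B` is reachable from `r` in `B`. -/
noncomputable def IsArbor {α β : Type} (tl hd : β → α) (B : Set β) (r : α) : Prop :=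
  (∀ a ∈ B, hd a ≠ r) ∧
  (∀ v ∈ vertsOf tl hd B r, v ≠ r → {a ∈ B | hd a = v}.ncard = 1) ∧
  (∀ v ∈ vertsOf tl hd B r, reachOn tl hd B r v)

/-- Number of arcs entering the vertex set `X`. -/
noncomputable def dIn {α β : Type} (tl hd : β → α) (X : Set α) : ℕ :=
  {a : β | hd a ∈ X ∧ tl a ∉ X}.ncard


/-- Reachability in the whole digraph. -/
def reaches {α β : Type} (tl hd : β → α) (u v : α) : Prop :=
  reachOn tl hd Set.univ u v

/-- `P_X^D`: the set of vertices from which some vertex of `X` is reachable. -/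
def Pset {α β : Type} (tl hd : β → α) (X : Set α) : Set α :=
  {v | ∃ x ∈ X, reaches tl hd v x}

/-!
Necessity: a root `r ∈ P_X \ X` reaches `X` inside its own arborescence, and the arc of that path
entering `X` lies in `B_r`; the `B_r` are arc-disjoint.

Sufficiency: since roots have in-degree 0, each strongly connected component `C` of the non-root
vertices is reached by the same set `K` of roots from every vertex of `C`. For each `r ∈ K` it is
enough to choose, arc-disjointly, one arc entering every vertex of `C`, coming from `C` or from a
vertex reachable from `r`, such that every vertex of `C` is reached inside `C` from one of these
arcs entering `C`. These families are grown greedily, arc by arc, keeping the cut condition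
`|J| ≤ #{arcs entering X usable by J}` for `X ⊆ C` and sets `J` of roots whose partial branchings
avoid `X` (Lovász's method): an arc entering an inclusion-minimal tight set meeting the uncovered
part of `C` keeps the condition, by uncrossing of tight pairs `(X, J)`. The cut condition is the
KKT condition for `W = X ∪ {u | no j ∈ J reaches u}`. Gluing the families over all components
gives the arborescences, as every arc entering a component starts at a vertex with strictly fewer
ancestors.
-/

theorem Set.ncard_add_ncard_le_of_subset {α : Type} [Finite α] {s t u v : Set α}
    (h₁ : s ∪ t ⊆ u ∪ v) (h₂ : s ∩ t ⊆ u ∩ v) : s.ncard + t.ncard ≤ u.ncard + v.ncard := by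
  rw [← ncard_union_add_ncard_inter s t, ← ncard_union_add_ncard_inter u v]
  exact add_le_add (ncard_le_ncard h₁) (ncard_le_ncard h₂)

section Reachability

variable {α β : Type} {tl hd : β → α}

theorem reachOn_mono {B B' : Set β} (h : B ⊆ B') {u v : α} (huv : reachOn tl hd B u v) :
    reachOn tl hd B' u v :=
  Relation.ReflTransGen.mono (r := stepOn tl hd B) (p := stepOn tl hd B')
    (fun _ _ ⟨a, ha, hu, hv⟩ => ⟨a, h ha, hu, hv⟩) u v huv

theorem reachOn.tail_arc {B : Set β} {u : α} {a : β} (hu : reachOn tl hd B u (tl a))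
    (ha : a ∈ B) : reachOn tl hd B u (hd a) :=
  Relation.ReflTransGen.tail hu ⟨a, ha, rfl, rfl⟩

theorem reachOn.exists_arc_entering {B : Set β} {X : Set α} {u v : α}
    (huv : reachOn tl hd B u v) (hu : u ∉ X) (hv : v ∈ X) :
    ∃ a ∈ B, tl a ∉ X ∧ hd a ∈ X := by
  induction huv using Relation.ReflTransGen.head_induction_on with
  | refl => exact absurd hv hu
  | @head u w huw _ ih =>
    obtain ⟨a, ha, rfl, rfl⟩ := huw
    by_cases hw : hd a ∈ X
    · exact ⟨a, ha, hu, hw⟩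
    · exact ih hw

theorem reaches.tail_arc {u : α} {a : β} (hu : reaches tl hd u (tl a)) :
    reaches tl hd u (hd a) :=
  reachOn.tail_arc hu (mem_univ a)

theorem reaches_refl (u : α) : reaches tl hd u u := Relation.ReflTransGen.refl

theorem eq_of_reaches_of_forall_hd_notMem {R : Set α} (hroot : ∀ a, hd a ∉ R) {u r : α}
    (hur : reaches tl hd u r) (hr : r ∈ R) : r = u := by
  rcases Relation.ReflTransGen.cases_tail hur with h | ⟨_, _, a, _, _, rfl⟩
  · exact h
  · exact absurd hr (hroot a)

end Reachability

section Component

variable {α β : Type} (tl hd : β → α) (C K : Set α) (elig : β → α → Prop)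

def cutArcs (A : Set β) (X J : Set α) : Set β :=
  {a ∈ A | hd a ∈ X ∧ (tl a ∈ C ∧ tl a ∉ X ∨ tl a ∉ C ∧ ∃ j ∈ J, elig a j)}

def Avoids (T : α → Set α) (J X : Set α) : Prop :=
  ∀ j ∈ J, ∀ x ∈ X, x ∉ T j

/-- `T r` is the part of `C` already covered by the branching of demand `r`. -/
def CutCondition (A : Set β) (T : α → Set α) : Prop :=
  ∀ X ⊆ C, X.Nonempty → ∀ J ⊆ K, Avoids T J X → J.ncard ≤ (cutArcs tl hd C elig A X J).ncard

/-- The pairs `(X, J)` whose cut condition can break when the branching of `r₀` takes an arc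
entering `X`. -/
structure IsTight (A : Set β) (T : α → Set α) (r₀ : α) (X J : Set α) : Prop where
  subset : X ⊆ C
  nonempty : X.Nonempty
  demands_subset : J ⊆ K
  notMem : r₀ ∉ J
  avoids : Avoids T J X
  ncard_le : (cutArcs tl hd C elig A X J).ncard ≤ J.ncard

variable {tl hd C K elig} {A : Set β} {T : α → Set α} {r₀ : α}

theorem cutArcs_inter_union_le [Finite β] (X Y J J' : Set α) :
    (cutArcs tl hd C elig A (X ∩ Y) (J ∪ J')).ncard +
        (cutArcs tl hd C elig A (X ∪ Y) (J ∩ J')).ncard ≤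
      (cutArcs tl hd C elig A X J).ncard + (cutArcs tl hd C elig A Y J').ncard := by
  apply Set.ncard_add_ncard_le_of_subset
  · rintro a (⟨hA, ⟨hX, hY⟩, ⟨htC, htXY⟩ | ⟨htC, j, hj | hj, he⟩⟩ |
      ⟨hA, hXY, ⟨htC, htXY⟩ | ⟨htC, j, ⟨hj, hj'⟩, he⟩⟩)
    · by_cases htX : tl a ∈ X
      · exact Or.inr ⟨hA, hY, Or.inl ⟨htC, fun htY => htXY ⟨htX, htY⟩⟩⟩
      · exact Or.inl ⟨hA, hX, Or.inl ⟨htC, htX⟩⟩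
    · exact Or.inl ⟨hA, hX, Or.inr ⟨htC, j, hj, he⟩⟩
    · exact Or.inr ⟨hA, hY, Or.inr ⟨htC, j, hj, he⟩⟩
    · rcases hXY with hX | hY
      · exact Or.inl ⟨hA, hX, Or.inl ⟨htC, fun h => htXY (Or.inl h)⟩⟩
      · exact Or.inr ⟨hA, hY, Or.inl ⟨htC, fun h => htXY (Or.inr h)⟩⟩
    · rcases hXY with hX | hY
      · exact Or.inl ⟨hA, hX, Or.inr ⟨htC, j, hj, he⟩⟩
      · exact Or.inr ⟨hA, hY, Or.inr ⟨htC, j, hj', he⟩⟩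
  · rintro a ⟨⟨hA, ⟨hX, hY⟩, -⟩, ⟨-, -, ⟨htC, htXY⟩ | ⟨htC, j, ⟨hj, hj'⟩, he⟩⟩⟩
    · exact ⟨⟨hA, hX, Or.inl ⟨htC, fun h => htXY (Or.inl h)⟩⟩,
        ⟨hA, hY, Or.inl ⟨htC, fun h => htXY (Or.inr h)⟩⟩⟩
    · exact ⟨⟨hA, hX, Or.inr ⟨htC, j, hj, he⟩⟩, ⟨hA, hY, Or.inr ⟨htC, j, hj', he⟩⟩⟩

theorem mem_cutArcs_of_superset {X X' J J' : Set α} {a : β} (ha : a ∈ cutArcs tl hd C elig A X J)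
    (hX' : hd a ∈ X') (hXX' : X' ⊆ X) (hJJ' : J ⊆ J') : a ∈ cutArcs tl hd C elig A X' J' := by
  obtain ⟨hA, -, ⟨htC, htX⟩ | ⟨htC, j, hj, he⟩⟩ := ha
  · exact ⟨hA, hX', Or.inl ⟨htC, fun h => htX (hXX' h)⟩⟩
  · exact ⟨hA, hX', Or.inr ⟨htC, j, hJJ' hj, he⟩⟩

theorem cutArcs_sdiff_singleton (X J : Set α) (a : β) :
    cutArcs tl hd C elig (A \ {a}) X J = cutArcs tl hd C elig A X J \ {a} := by
  ext b
  simp only [cutArcs, mem_sdiff, mem_singleton_iff, mem_ofPred_eq]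
  tauto

theorem IsTight.inter [Finite α] [Finite β] {X Y J J' : Set α}
    (hc : CutCondition tl hd C K elig A T) (hX : IsTight tl hd C K elig A T r₀ X J)
    (hY : IsTight tl hd C K elig A T r₀ Y J') (hXY : (X ∩ Y).Nonempty) :
    IsTight tl hd C K elig A T r₀ (X ∩ Y) (J ∪ J') := by
  have havoid_inter : Avoids T (J ∪ J') (X ∩ Y) := by
    rintro j (hj | hj) x ⟨hxX, hxY⟩
    exacts [hX.avoids j hj x hxX, hY.avoids j hj x hxY]
  have havoid_union : Avoids T (J ∩ J') (X ∪ Y) := by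
    rintro j ⟨hj, hj'⟩ x (hx | hx)
    exacts [hX.avoids j hj x hx, hY.avoids j hj' x hx]
  have h_inter := hc _ (inter_subset_left.trans hX.subset) hXY _
    (union_subset hX.demands_subset hY.demands_subset) havoid_inter
  have h_union := hc _ (union_subset hX.subset hY.subset) (hX.nonempty.mono subset_union_left) _
    (inter_subset_left.trans hX.demands_subset) havoid_union
  have h_submod := cutArcs_inter_union_le (tl := tl) (hd := hd) (C := C) (elig := elig)
    (A := A) X Y J J'
  have h_card := ncard_union_add_ncard_inter J J'
  refine ⟨inter_subset_left.trans hX.subset, hXY,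
    union_subset hX.demands_subset hY.demands_subset, ?_, havoid_inter, ?_⟩
  · rintro (h | h)
    exacts [hX.notMem h, hY.notMem h]
  · have := hX.ncard_le
    have := hY.ncard_le
    omega

theorem CutCondition.sdiff_singleton_update [DecidableEq α] (hc : CutCondition tl hd C K elig A T)
    {a : β} (hsafe : ∀ X J, IsTight tl hd C K elig A T r₀ X J → hd a ∈ X →
      a ∉ cutArcs tl hd C elig A X J) :
    CutCondition tl hd C K elig (A \ {a}) (Function.update T r₀ (insert (hd a) (T r₀))) := by
  intro X hXC hX J hJK havoid
  have havoid' : Avoids T J X := by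
    intro j hj x hx hxT
    refine havoid j hj x hx ?_
    rcases eq_or_ne j r₀ with rfl | hj₀
    · simp [hxT]
    · simpa [Function.update_of_ne hj₀] using hxT
  rw [cutArcs_sdiff_singleton]
  by_cases ha : a ∈ cutArcs tl hd C elig A X J
  · have hr₀ : r₀ ∉ J := fun h => havoid r₀ h (hd a) ha.2.1 (by simp)
    have hslack : J.ncard < (cutArcs tl hd C elig A X J).ncard := by
      by_contra! hle
      exact hsafe X J ⟨hXC, hX, hJK, hr₀, havoid', hle⟩ ha.2.1 ha
    rw [ncard_sdiff_singleton_of_mem ha]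
    omega
  · rw [sdiff_singleton_eq_self ha]
    exact hc X hXC hX J hJK havoid'

/-- The pair is an inclusion-minimal tight `X₁` meeting `C \ T r₀` with a maximal `J₂`, or
`(C, ∅)` when there is no such tight pair. -/
theorem CutCondition.exists_dominating_pair [Finite α] [Finite β]
    (hc : CutCondition tl hd C K elig A T) (hM : (C \ T r₀).Nonempty) :
    ∃ X₁ J₂, X₁ ⊆ C ∧ J₂ ⊆ K ∧ r₀ ∉ J₂ ∧ Avoids T J₂ X₁ ∧ (X₁ \ T r₀).Nonempty ∧
      (cutArcs tl hd C elig A X₁ J₂).ncard ≤ J₂.ncard ∧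
      ∀ X J, IsTight tl hd C K elig A T r₀ X J → ((X ∩ X₁) \ T r₀).Nonempty →
        X₁ ⊆ X ∧ J ⊆ J₂ := by
  by_cases htight : ∃ X J, IsTight tl hd C K elig A T r₀ X J ∧ (X \ T r₀).Nonempty
  · obtain ⟨X₁, hX₁⟩ := exists_minimal_of_wellFoundedLT
      (fun X => ∃ J, IsTight tl hd C K elig A T r₀ X J ∧ (X \ T r₀).Nonempty) htight
    obtain ⟨J₁, hJ₁, hX₁M⟩ := hX₁.prop
    obtain ⟨J₂, hJ₂⟩ := exists_maximal_of_wellFoundedGT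
      (fun J => IsTight tl hd C K elig A T r₀ X₁ J) ⟨J₁, hJ₁⟩
    have htight₂ : IsTight tl hd C K elig A T r₀ X₁ J₂ := hJ₂.prop
    refine ⟨X₁, J₂, htight₂.subset, htight₂.demands_subset, htight₂.notMem, htight₂.avoids,
      hX₁M, htight₂.ncard_le, fun X J hXJ hmeet => ?_⟩
    have hmeet' := hXJ.inter hc htight₂ (hmeet.mono sdiff_subset)
    have hX₁X : X₁ ⊆ X :=
      (hX₁.le_of_le ⟨J ∪ J₂, hmeet', hmeet⟩ inter_subset_right).trans inter_subset_left
    rw [inter_eq_right.mpr hX₁X] at hmeet'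
    exact ⟨hX₁X, (hJ₂.le_of_ge hmeet' subset_union_right).trans' subset_union_left⟩
  · refine ⟨C, ∅, subset_rfl, empty_subset K, notMem_empty r₀, fun _ h => absurd h (notMem_empty _),
      hM, by simp [cutArcs], fun X J hXJ hmeet => absurd ⟨X, J, hXJ, hmeet.mono ?_⟩ htight⟩
    exact sdiff_subset_sdiff_left inter_subset_left

theorem CutCondition.exists_safe_arc [Finite α] [Finite β]
    (hc : CutCondition tl hd C K elig A T) (hr₀ : r₀ ∈ K) (hM : (C \ T r₀).Nonempty) :
    ∃ a ∈ A, hd a ∈ C \ T r₀ ∧ (tl a ∈ T r₀ ∨ tl a ∉ C ∧ elig a r₀) ∧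
      ∀ X J, IsTight tl hd C K elig A T r₀ X J → hd a ∈ X → a ∉ cutArcs tl hd C elig A X J := by
  obtain ⟨X₁, J₂, hX₁C, hJ₂K, hr₀J₂, havoid, hX₁M, hle, hdom⟩ := hc.exists_dominating_pair hM
  have havoid' : Avoids T (insert r₀ J₂) (X₁ \ T r₀) := by
    rintro j (rfl | hj) x hx
    exacts [hx.2, havoid j hj x hx.1]
  -- `(X₁ \ T r₀, insert r₀ J₂)` needs one more arc than the tight pair `(X₁, J₂)` provides
  have hlt := hc _ (sdiff_subset.trans hX₁C) hX₁M _ (insert_subset hr₀ hJ₂K) havoid'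
  rw [ncard_insert_of_notMem hr₀J₂] at hlt
  obtain ⟨a, ⟨hA, ⟨hhdX₁, hhdT⟩, hentry⟩, hnot⟩ :=
    exists_mem_notMem_of_ncard_lt_ncard (hle.trans_lt hlt)
  refine ⟨a, hA, ⟨hX₁C hhdX₁, hhdT⟩, ?_, fun X J hXJ hX ha => ?_⟩
  · rcases hentry with ⟨htC, htX₁T⟩ | ⟨htC, j, rfl | hj, he⟩
    · left
      by_contra h
      exact hnot ⟨hA, hhdX₁, Or.inl ⟨htC, fun htX₁ => htX₁T ⟨htX₁, h⟩⟩⟩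
    · exact Or.inr ⟨htC, he⟩
    · exact absurd ⟨hA, hhdX₁, Or.inr ⟨htC, j, hj, he⟩⟩ hnot
  · obtain ⟨hX₁X, hJJ₂⟩ := hdom X J hXJ ⟨hd a, ⟨hX, hhdX₁⟩, hhdT⟩
    exact hnot (mem_cutArcs_of_superset ha hhdX₁ hX₁X hJJ₂)

end Component

section Completion

variable {α β : Type} (tl hd : β → α) (C : Set α) (elig : β → α → Prop)

structure Completes (S : Set α) (r : α) (F : Set β) : Prop where
  hd_mem : ∀ a ∈ F, hd a ∈ C \ S
  tl_mem : ∀ a ∈ F, tl a ∈ C ∨ elig a r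
  ncard_eq_one : ∀ v ∈ C \ S, {a ∈ F | hd a = v}.ncard = 1
  reachable : ∀ v ∈ C \ S, ∃ s, (s ∈ S ∨ ∃ a ∈ F, tl a ∉ C ∧ hd a = s) ∧
    reachOn tl hd {a ∈ F | tl a ∈ C} s v

variable {tl hd C elig}

theorem completes_empty {S : Set α} {r : α} (hCS : C ⊆ S) : Completes tl hd C elig S r ∅ where
  hd_mem _ h := absurd h (notMem_empty _)
  tl_mem _ h := absurd h (notMem_empty _)
  ncard_eq_one _ hv := absurd (hCS hv.1) hv.2
  reachable _ hv := absurd (hCS hv.1) hv.2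

theorem Completes.insert_arc {S : Set α} {r : α} {F : Set β} {a : β}
    (hF : Completes tl hd C elig (insert (hd a) S) r F) (hSC : S ⊆ C) (hhd : hd a ∈ C \ S)
    (htl : tl a ∈ S ∨ tl a ∉ C ∧ elig a r) : Completes tl hd C elig S r (insert a F) := by
  have hF_hd : ∀ b ∈ F, hd b ≠ hd a := fun b hb h => (hF.hd_mem b hb).2 (h ▸ mem_insert _ _)
  have hseed : ∃ s, (s ∈ S ∨ ∃ b ∈ insert a F, tl b ∉ C ∧ hd b = s) ∧
      reachOn tl hd {b ∈ insert a F | tl b ∈ C} s (hd a) := by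
    rcases htl with htS | ⟨htC, -⟩
    · exact ⟨tl a, Or.inl htS, reachOn.tail_arc Relation.ReflTransGen.refl
        ⟨mem_insert a F, hSC htS⟩⟩
    · exact ⟨hd a, Or.inr ⟨a, mem_insert a F, htC, rfl⟩, Relation.ReflTransGen.refl⟩
  have hmono : {b ∈ F | tl b ∈ C} ⊆ {b ∈ insert a F | tl b ∈ C} :=
    fun b ⟨hb, hbC⟩ => ⟨mem_insert_of_mem a hb, hbC⟩
  refine ⟨?_, ?_, fun v hv => ?_, fun v hv => ?_⟩
  · rintro b (rfl | hb)
    exacts [hhd, sdiff_subset_sdiff_right (subset_insert _ _) (hF.hd_mem b hb)]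
  · rintro b (rfl | hb)
    exacts [htl.imp (hSC ·) And.right, hF.tl_mem b hb]
  · rcases eq_or_ne v (hd a) with rfl | hva
    · convert ncard_singleton a
      ext b
      constructor
      · rintro ⟨rfl | hb, hbv⟩
        exacts [rfl, absurd hbv (hF_hd b hb)]
      · rintro rfl
        exact ⟨mem_insert _ F, rfl⟩
    · convert hF.ncard_eq_one v ⟨hv.1, by simp [hva, hv.2]⟩ using 2
      ext b
      constructor
      · rintro ⟨rfl | hb, hbv⟩
        exacts [absurd hbv.symm hva, ⟨hb, hbv⟩]
      · exact fun ⟨hb, hbv⟩ => ⟨mem_insert_of_mem a hb, hbv⟩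
  · rcases eq_or_ne v (hd a) with rfl | hva
    · exact hseed
    obtain ⟨s, hs, hsv⟩ := hF.reachable v ⟨hv.1, by simp [hva, hv.2]⟩
    replace hsv := reachOn_mono hmono hsv
    rcases hs with (rfl | hs) | ⟨b, hb, hbC, rfl⟩
    · obtain ⟨s', hs', hs'v⟩ := hseed
      exact ⟨s', hs', hs'v.trans hsv⟩
    · exact ⟨s, Or.inl hs, hsv⟩
    · exact ⟨hd b, Or.inr ⟨b, mem_insert_of_mem a hb, hbC, rfl⟩, hsv⟩

theorem pairwiseDisjoint_update_insert [DecidableEq α] {K : Set α} {B : α → Set β} {r₀ : α}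
    {a : β} (hB : K.PairwiseDisjoint B) (ha : ∀ r ∈ K, a ∉ B r) :
    K.PairwiseDisjoint (Function.update B r₀ (insert a (B r₀))) := by
  intro r hr r' hr' hne
  have h := hB hr hr' hne
  simp only [Function.onFun] at h ⊢
  rcases eq_or_ne r r₀ with rfl | hr₀
  · rw [Function.update_self, Function.update_of_ne hne.symm, disjoint_insert_left]
    exact ⟨ha r' hr', h⟩
  rcases eq_or_ne r' r₀ with rfl | hr'₀
  · rw [Function.update_self, Function.update_of_ne hne, disjoint_insert_right]
    exact ⟨ha r hr, h⟩
  · rwa [Function.update_of_ne hr₀, Function.update_of_ne hr'₀]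

def uncovered (K C : Set α) (T : α → Set α) : Set (α × α) :=
  {p | p.1 ∈ K ∧ p.2 ∈ C \ T p.1}

theorem uncovered_update_insert_ssubset [DecidableEq α] {K : Set α} {T : α → Set α} {r₀ v : α}
    (hr₀ : r₀ ∈ K) (hv : v ∈ C \ T r₀) :
    uncovered K C (Function.update T r₀ (insert v (T r₀))) ⊂ uncovered K C T := by
  refine ⟨fun ⟨r, u⟩ ⟨hr, hu, huT⟩ => ⟨hr, hu, fun h => huT ?_⟩,
    fun h => (h (show (r₀, v) ∈ uncovered K C T from ⟨hr₀, hv⟩)).2.2 (by simp)⟩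
  rcases eq_or_ne r r₀ with rfl | hr'
  · simp [h]
  · simpa [Function.update_of_ne hr'] using h

theorem exists_completion [Finite α] [Finite β] [DecidableEq α] {K : Set α} (A : Set β)
    (T : α → Set α) (hTC : ∀ r ∈ K, T r ⊆ C) (hc : CutCondition tl hd C K elig A T) :
    ∃ B : α → Set β, K.PairwiseDisjoint B ∧
      ∀ r ∈ K, B r ⊆ A ∧ Completes tl hd C elig (T r) r (B r) := by
  induction hn : (uncovered K C T).ncard using Nat.strong_induction_on generalizing A T with
  | _ n ih =>
  rcases (uncovered K C T).eq_empty_or_nonempty with hU | ⟨⟨r₀, v₀⟩, hr₀, hv₀⟩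
  · refine ⟨fun _ => ∅, fun _ _ _ _ _ => disjoint_bot_left, fun r hr =>
      ⟨empty_subset A, completes_empty fun v hv => ?_⟩⟩
    by_contra hvT
    exact (eq_empty_iff_forall_notMem.mp hU) (r, v) ⟨hr, hv, hvT⟩
  dsimp only at hr₀ hv₀
  obtain ⟨a, hA, hhd, htl, hsafe⟩ := hc.exists_safe_arc hr₀ ⟨v₀, hv₀⟩
  set T' := Function.update T r₀ (insert (hd a) (T r₀))
  have hT'C : ∀ r ∈ K, T' r ⊆ C := by
    intro r hr
    rcases eq_or_ne r r₀ with rfl | hr'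
    · simpa [T'] using insert_subset hhd.1 (hTC r hr)
    · simpa [T', Function.update_of_ne hr'] using hTC r hr
  have hlt : (uncovered K C T').ncard < n :=
    hn ▸ ncard_lt_ncard (uncovered_update_insert_ssubset hr₀ hhd)
  obtain ⟨B, hdisj, hB⟩ := ih _ hlt (A \ {a}) T' hT'C (hc.sdiff_singleton_update hsafe) rfl
  have haB : ∀ r ∈ K, a ∉ B r := fun r hr h => ((hB r hr).1 h).2 rfl
  refine ⟨Function.update B r₀ (insert a (B r₀)), pairwiseDisjoint_update_insert hdisj haB,
    fun r hr => ?_⟩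
  obtain ⟨hBA, hcompl⟩ := hB r hr
  rcases eq_or_ne r r₀ with rfl | hr'
  · simp only [Function.update_self]
    exact ⟨insert_subset hA (hBA.trans sdiff_subset),
      (by simpa [T'] using hcompl : Completes tl hd C elig _ r (B r)).insert_arc (hTC r hr) hhd htl⟩
  · simp only [Function.update_of_ne hr']
    exact ⟨hBA.trans sdiff_subset, by simpa [T', Function.update_of_ne hr'] using hcompl⟩

end Completion

section Packing

variable {α β : Type} {tl hd : β → α}

def scc (tl hd : β → α) (v : α) : Set α :=
  {u | reaches tl hd u v ∧ reaches tl hd v u}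

theorem mem_scc_self (v : α) : v ∈ scc tl hd v := ⟨reaches_refl v, reaches_refl v⟩

theorem scc_eq_of_mem {u v : α} (h : u ∈ scc tl hd v) : scc tl hd u = scc tl hd v := by
  ext w
  exact ⟨fun hw => ⟨hw.1.trans h.1, h.2.trans hw.2⟩, fun hw => ⟨hw.1.trans h.2, h.1.trans hw.2⟩⟩

theorem disjoint_scc {R : Set α} (hroot : ∀ a, hd a ∉ R) {v : α} (hv : v ∉ R) :
    Disjoint (scc tl hd v) R :=
  disjoint_left.mpr fun _ hu huR => hv (eq_of_reaches_of_forall_hd_notMem hroot hu.2 huR ▸ huR)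

def rootsReaching (tl hd : β → α) (R C : Set α) : Set α :=
  {r ∈ R | ∃ u ∈ C, reaches tl hd r u}

theorem mem_rootsReaching_scc {R : Set α} {r v : α} (hr : r ∈ R) (hrv : reaches tl hd r v) :
    r ∈ rootsReaching tl hd R (scc tl hd v) :=
  ⟨hr, v, mem_scc_self v, hrv⟩

theorem reaches_of_mem_rootsReaching_scc {R : Set α} {r v u : α}
    (hr : r ∈ rootsReaching tl hd R (scc tl hd v)) (hu : u ∈ scc tl hd v) : reaches tl hd r u := by
  obtain ⟨-, w, hw, hrw⟩ := hr
  exact hrw.trans (hw.1.trans hu.2)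

theorem ncard_ancestors_lt [Finite α] {u v : α} (huv : reaches tl hd u v)
    (hvu : ¬ reaches tl hd v u) :
    {w | reaches tl hd w u}.ncard < {w | reaches tl hd w v}.ncard :=
  ncard_lt_ncard ⟨fun _ hw => hw.trans huv, fun h => hvu (h (reaches_refl v))⟩

/-- The set `W = X ∪ {u | no j ∈ J reaches u}` turns the KKT condition into the cut condition:
every `j ∈ J` lies in `P_W \ W`, and every arc entering `W` enters `X` and is usable by `J`. -/
theorem cutCondition_of_kkt [Finite α] [Finite β] {V R C K : Set α}
    (hcond : ∀ X : Set α, (X ∩ V).Nonempty →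
      (dIn tl hd X : ℤ) ≥ ((Pset tl hd X ∩ R).ncard : ℤ) - ((X ∩ R).ncard : ℤ))
    (hCV : C ⊆ V) (hCR : Disjoint C R) (hKR : K ⊆ R)
    (hK : ∀ r ∈ K, ∀ x ∈ C, reaches tl hd r x) :
    CutCondition tl hd C K (fun a r => reaches tl hd r (tl a)) univ (fun _ => ∅) := by
  intro X hXC ⟨x₀, hx₀⟩ J hJK _
  set W := X ∪ {u | ∀ j ∈ J, ¬ reaches tl hd j u}
  have hJW : Disjoint (W ∩ R) J := by
    refine disjoint_right.mpr fun j hj ⟨hjW, _⟩ => ?_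
    rcases hjW with hjX | hj'
    exacts [disjoint_left.mp hCR (hXC hjX) (hKR (hJK hj)), hj' j hj (reaches_refl j)]
  have hcard : (W ∩ R).ncard + J.ncard ≤ (Pset tl hd W ∩ R).ncard := by
    rw [← ncard_union_eq hJW]
    refine ncard_le_ncard (union_subset (fun w hw => ⟨⟨w, hw.1, reaches_refl w⟩, hw.2⟩)
      fun j hj => ⟨⟨x₀, Or.inl hx₀, hK j (hJK hj) x₀ (hXC hx₀)⟩, hKR (hJK hj)⟩)
  have hcut : {a | hd a ∈ W ∧ tl a ∉ W} ⊆
      cutArcs tl hd C (fun a r => reaches tl hd r (tl a)) univ X J := by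
    rintro a ⟨hhd, htl⟩
    simp only [W, mem_union, mem_ofPred_eq, not_or, not_forall, not_not] at htl
    obtain ⟨htX, j, hj, hjt⟩ := htl
    have hhdX : hd a ∈ X := hhd.resolve_right fun h => h j hj hjt.tail_arc
    by_cases htC : tl a ∈ C
    exacts [⟨mem_univ a, hhdX, Or.inl ⟨htC, htX⟩⟩, ⟨mem_univ a, hhdX, Or.inr ⟨htC, j, hj, hjt⟩⟩]
  have hkkt := hcond W ⟨x₀, Or.inl hx₀, hCV (hXC hx₀)⟩
  have hle := ncard_le_ncard hcut
  rw [dIn] at hkkt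
  omega

def IsSccPacking (tl hd : β → α) (R : Set α) (sol : Set α → α → Set β) : Prop :=
  ∀ v ∉ R, (rootsReaching tl hd R (scc tl hd v)).PairwiseDisjoint (sol (scc tl hd v)) ∧
    ∀ r ∈ rootsReaching tl hd R (scc tl hd v),
      Completes tl hd (scc tl hd v) (fun a r => reaches tl hd r (tl a)) ∅ r (sol (scc tl hd v) r)

theorem exists_isSccPacking [Finite α] [Finite β] {V R : Set α} (hpart : V ∪ R = univ)
    (hroot : ∀ a, hd a ∉ R)
    (hcond : ∀ X : Set α, (X ∩ V).Nonempty →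
      (dIn tl hd X : ℤ) ≥ ((Pset tl hd X ∩ R).ncard : ℤ) - ((X ∩ R).ncard : ℤ)) :
    ∃ sol, IsSccPacking tl hd R sol := by
  classical
  have hsol : ∀ C : Set α, ∃ B : α → Set β, ∀ v ∉ R, scc tl hd v = C →
      (rootsReaching tl hd R C).PairwiseDisjoint B ∧ ∀ r ∈ rootsReaching tl hd R C,
        Completes tl hd C (fun a r => reaches tl hd r (tl a)) ∅ r (B r) := by
    intro C
    by_cases hC : ∃ v ∉ R, scc tl hd v = C
    · obtain ⟨v, hv, rfl⟩ := hC
      have hCR := disjoint_scc (tl := tl) hroot hv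
      have hCV : scc tl hd v ⊆ V := fun u hu =>
        ((hpart ▸ mem_univ u : u ∈ V ∪ R)).resolve_right (disjoint_left.mp hCR hu)
      obtain ⟨B, hdisj, hB⟩ := exists_completion univ (fun _ => ∅) (fun _ _ => empty_subset _)
        (cutCondition_of_kkt hcond hCV hCR (fun _ hr => hr.1)
          fun _ hr _ hu => reaches_of_mem_rootsReaching_scc hr hu)
      exact ⟨B, fun _ _ _ => ⟨hdisj, fun r hr => (hB r hr).2⟩⟩
    · exact ⟨fun _ => ∅, fun v hv hvC => absurd ⟨v, hv, hvC⟩ hC⟩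
  choose sol hsol using hsol
  exact ⟨sol, fun v hv => hsol _ v hv rfl⟩

def glue (tl hd : β → α) (sol : Set α → α → Set β) (r : α) : Set β :=
  {a | reaches tl hd r (hd a) ∧ a ∈ sol (scc tl hd (hd a)) r}

variable {R : Set α} {sol : Set α → α → Set β}

theorem mem_glue (hsol : IsSccPacking tl hd R sol) {r v : α} {a : β} (hv : v ∉ R)
    (hr : r ∈ rootsReaching tl hd R (scc tl hd v)) (ha : a ∈ sol (scc tl hd v) r) :
    a ∈ glue tl hd sol r := by
  have hhd := (((hsol v hv).2 r hr).hd_mem a ha).1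
  exact ⟨reaches_of_mem_rootsReaching_scc hr hhd, by rwa [scc_eq_of_mem hhd]⟩

theorem pairwiseDisjoint_glue (hroot : ∀ a, hd a ∉ R) (hsol : IsSccPacking tl hd R sol) :
    R.PairwiseDisjoint (glue tl hd sol) := by
  refine fun r hr r' hr' hne => disjoint_left.mpr fun a ha ha' => ?_
  exact disjoint_left.mp ((hsol (hd a) (hroot a)).1 (mem_rootsReaching_scc hr ha.1)
    (mem_rootsReaching_scc hr' ha'.1) hne) ha.2 ha'.2

theorem reaches_tl_of_mem_glue (hroot : ∀ a, hd a ∉ R) (hsol : IsSccPacking tl hd R sol)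
    {r : α} (hr : r ∈ R) {a : β} (ha : a ∈ glue tl hd sol r) : reaches tl hd r (tl a) := by
  rcases ((hsol (hd a) (hroot a)).2 r (mem_rootsReaching_scc hr ha.1)).tl_mem a ha.2 with h | h
  exacts [ha.1.trans h.2, h]

theorem ncard_glue_inArcs (hroot : ∀ a, hd a ∉ R) (hsol : IsSccPacking tl hd R sol) {r v : α}
    (hr : r ∈ R) (hrv : reaches tl hd r v) (hvr : v ≠ r) :
    {a ∈ glue tl hd sol r | hd a = v}.ncard = 1 := by
  have hv : v ∉ R := fun h => hvr (eq_of_reaches_of_forall_hd_notMem hroot hrv h)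
  have hK := mem_rootsReaching_scc hr hrv
  convert ((hsol v hv).2 r hK).ncard_eq_one v ⟨mem_scc_self v, notMem_empty v⟩ using 2
  ext a
  constructor
  · rintro ⟨ha, rfl⟩
    exact ⟨ha.2, rfl⟩
  · exact fun ⟨ha, hav⟩ => ⟨mem_glue hsol hv hK ha, hav⟩

/-- By induction along the order of the components: the entering arc of the component of `v`
given by `sol` starts at a vertex with strictly fewer ancestors. -/
theorem reachOn_glue [Finite α] (hroot : ∀ a, hd a ∉ R) (hsol : IsSccPacking tl hd R sol)
    {r : α} (hr : r ∈ R) (v : α) (hrv : reaches tl hd r v) :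
    reachOn tl hd (glue tl hd sol r) r v := by
  induction hn : {u | reaches tl hd u v}.ncard using Nat.strong_induction_on generalizing v with
  | _ n ih =>
  rcases eq_or_ne v r with rfl | hvr
  · exact Relation.ReflTransGen.refl
  have hv : v ∉ R := fun h => hvr (eq_of_reaches_of_forall_hd_notMem hroot hrv h)
  have hK := mem_rootsReaching_scc hr hrv
  have hcompl := (hsol v hv).2 r hK
  obtain ⟨_, h | ⟨a, ha, htC, rfl⟩, hpath⟩ :=
    hcompl.reachable v ⟨mem_scc_self v, notMem_empty v⟩
  · exact absurd h (notMem_empty _)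
  have hhd : hd a ∈ scc tl hd v := (hcompl.hd_mem a ha).1
  have hrt : reaches tl hd r (tl a) := (hcompl.tl_mem a ha).resolve_left htC
  have htv : reaches tl hd (tl a) v := (reaches_refl (tl a)).tail_arc.trans hhd.1
  have hlt := hn ▸ ncard_ancestors_lt htv fun hvt => htC ⟨htv, hvt⟩
  refine ((ih _ hlt (tl a) hrt rfl).tail_arc (mem_glue hsol hv hK ha)).trans ?_
  exact reachOn_mono (fun b hb => mem_glue hsol hv hK hb.1) hpath

end Packing

section Arborescence

variable {α β : Type} {tl hd : β → α}

theorem isArbor_and_vertsOf_eq {B : Set β} {r : α} (hhd : ∀ a ∈ B, hd a ≠ r)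
    (htl : ∀ a ∈ B, reaches tl hd r (tl a))
    (hin : ∀ v, reaches tl hd r v → v ≠ r → {a ∈ B | hd a = v}.ncard = 1)
    (hreach : ∀ v, reaches tl hd r v → reachOn tl hd B r v) :
    IsArbor tl hd B r ∧ vertsOf tl hd B r = {v | reaches tl hd r v} := by
  have hverts : vertsOf tl hd B r = {v | reaches tl hd r v} := by
    refine Subset.antisymm ?_ fun v hv => ?_
    · rintro v (rfl | ⟨a, ha, rfl⟩ | ⟨a, ha, rfl⟩)
      exacts [reaches_refl v, htl a ha, (htl a ha).tail_arc]
    rcases eq_or_ne v r with rfl | hvr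
    · exact mem_insert v _
    obtain ⟨a, ha, rfl⟩ := nonempty_of_ncard_ne_zero (by rw [hin v hv hvr]; exact one_ne_zero)
    exact mem_insert_of_mem r (Or.inr (mem_image_of_mem hd ha))
  exact ⟨⟨hhd, fun v hv => hin v (hverts.subset hv), fun v hv => hreach v (hverts.subset hv)⟩,
    hverts⟩

theorem ncard_sdiff_le_dIn [Finite α] [Finite β] {R : Set α} {B : α → Set β}
    (hdisj : R.PairwiseDisjoint B)
    (hreach : ∀ r ∈ R, ∀ v, reaches tl hd r v → reachOn tl hd (B r) r v)
    (X : Set α) : ((Pset tl hd X ∩ R) \ X).ncard ≤ dIn tl hd X := by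
  classical
  have := Fintype.ofFinite α
  have := Fintype.ofFinite β
  rw [dIn, ncard_eq_toFinset_card', ncard_eq_toFinset_card']
  refine Finset.card_le_card_of_forall_subsingleton (fun r a => a ∈ B r) (fun r hr => ?_)
    fun a _ r₁ hr₁ r₂ hr₂ => ?_
  · obtain ⟨⟨⟨x, hx, hrx⟩, hR⟩, hrX⟩ := mem_toFinset.mp hr
    obtain ⟨a, ha, htl, hhd⟩ := (hreach r hR x hrx).exists_arc_entering hrX hx
    exact ⟨a, mem_toFinset.mpr ⟨hhd, htl⟩, ha⟩
  · obtain ⟨hr₁, ha₁⟩ := hr₁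
    obtain ⟨hr₂, ha₂⟩ := hr₂
    by_contra hne
    exact disjoint_left.mp (hdisj (mem_toFinset.mp hr₁).1.2 (mem_toFinset.mp hr₂).1.2 hne) ha₁ ha₂

end Arborescence

theorem kkt_packing_reachability_arborescences_general
    {α β : Type} [Fintype α] [Fintype β]
    (V R : Set α) (tl hd : β → α)
    (hpart : V ∪ R = Set.univ)
    (hroot : ∀ a : β, hd a ∉ R) :
    (∃ B : α → Set β,
      (∀ r ∈ R, ∀ r' ∈ R, r ≠ r' → Disjoint (B r) (B r')) ∧
      (∀ r ∈ R, IsArbor tl hd (B r) r ∧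
        vertsOf tl hd (B r) r = {v | reaches tl hd r v}))
    ↔ (∀ X : Set α, (X ∩ V).Nonempty →
        (dIn tl hd X : ℤ) ≥ ((Pset tl hd X ∩ R).ncard : ℤ) - ((X ∩ R).ncard : ℤ)) := by
  constructor
  · rintro ⟨B, hdisj, hB⟩ X -
    have hreach : ∀ r ∈ R, ∀ v, reaches tl hd r v → reachOn tl hd (B r) r v :=
      fun r hr v hv => (hB r hr).1.2.2 v ((hB r hr).2 ▸ hv)
    have hout := ncard_sdiff_le_dIn (fun r hr r' hr' hne => hdisj r hr r' hr' hne) hreach X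
    have hsplit := ncard_inter_add_ncard_sdiff_eq_ncard (Pset tl hd X ∩ R) X
    have hin : (Pset tl hd X ∩ R ∩ X).ncard ≤ (X ∩ R).ncard :=
      ncard_le_ncard fun r hr => ⟨hr.2, hr.1.2⟩
    omega
  · intro hcond
    obtain ⟨sol, hsol⟩ := exists_isSccPacking hpart hroot hcond
    refine ⟨glue tl hd sol, fun r hr r' hr' hne => pairwiseDisjoint_glue hroot hsol hr hr' hne,
      fun r hr => isArbor_and_vertsOf_eq (fun a _ h => hroot a (h ▸ hr))
        (fun a => reaches_tl_of_mem_glue hroot hsol hr) (fun v => ncard_glue_inArcs hroot hsol hr)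
        (reachOn_glue hroot hsol hr)⟩

/-- The Kamiyama–Katoh–Takizawa theorem on packing reachability arborescences. -/
theorem kkt_packing_reachability_arborescences
    {α β : Type} [Fintype α] [Fintype β]
    (V R : Set α) (tl hd : β → α)
    (hpart : V ∪ R = Set.univ) (hdisj : Disjoint V R)
    (hroot : ∀ a : β, hd a ∉ R) :
    (∃ B : α → Set β,
      (∀ r ∈ R, ∀ r' ∈ R, r ≠ r' → Disjoint (B r) (B r')) ∧
      (∀ r ∈ R, IsArbor tl hd (B r) r ∧
        vertsOf tl hd (B r) r = {v | reaches tl hd r v}))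
    ↔ (∀ X : Set α, (X ∩ V).Nonempty →
        (dIn tl hd X : ℤ) ≥ ((Pset tl hd X ∩ R).ncard : ℤ) - ((X ∩ R).ncard : ℤ)) :=
  kkt_packing_reachability_arborescences_general V R tl hd hpart hroot
end

section
/- Let (H=(V∪R, A∪E), M=(R,r_M)) be a simply matroid-rooted mixed hypergraph and define b(X) = r_M(R)(|V_X|−1) + r_M(R_X) for X ⊆ A∪E. Then the family I = { X ⊆ A∪E : b(Y) ≥ |Y| for all nonempty Y ⊆ X } is the family of independent sets of a matroid on A∪E (the Tanigawa matroid). -/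
open Set

/-- A matroid given by its rank function. -/
structure RankFn (α : Type) where
  rk : Set α → ℕ
  rk_empty : rk ∅ = 0
  subcard : ∀ X : Set α, X.Finite → rk X ≤ X.ncard
  mono : ∀ X Y : Set α, X ⊆ Y → rk X ≤ rk Y
  submod : ∀ X Y : Set α, rk (X ∪ Y) + rk (X ∩ Y) ≤ rk X + rk Y
  unit : ∀ (X : Set α) (y : α), rk (insert y X) ≤ rk X + 1

/-- `B` is a basis of `X` in the matroid `M`. -/
def IsBasisOf {α : Type} (M : RankFn α) (B X : Set α) : Prop :=
  B ⊆ X ∧ B.ncard = M.rk B ∧ M.rk B = M.rk X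

/-- Vertices incident to an edge of a mixed hypergraph (dyperedges are `Sum.inl`,
hyperedges are `Sum.inr`). -/
def incVerts {α δ ε : Type} (hdD : δ → α) (tlD : δ → Set α) (vE : ε → Set α) :
    δ ⊕ ε → Set α
  | Sum.inl a => insert (hdD a) (tlD a)
  | Sum.inr e => vE e

/-- `V_X`: vertices of `V` incident to some edge of `X`. -/
def VXset {α δ ε : Type} (hdD : δ → α) (tlD : δ → Set α) (vE : ε → Set α)
    (V : Set α) (X : Set (δ ⊕ ε)) : Set α :=
  V ∩ ⋃ x ∈ X, incVerts hdD tlD vE x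

/-- `R_X`: vertices of `R` incident to some dyperedge of `X`. -/
def RXset {α δ ε : Type} (hdD : δ → α) (tlD : δ → Set α)
    (R : Set α) (X : Set (δ ⊕ ε)) : Set α :=
  R ∩ ⋃ a ∈ {a : δ | Sum.inl a ∈ X}, insert (hdD a) (tlD a)

/-- The Tanigawa function `b(X) = r_M(R)(|V_X|−1) + r_M(R_X)`. -/
noncomputable def bTan {α δ ε : Type} (hdD : δ → α) (tlD : δ → Set α)
    (vE : ε → Set α) (V R : Set α) (M : RankFn α) (X : Set (δ ⊕ ε)) : ℤ :=
  (M.rk R : ℤ) * (((VXset hdD tlD vE V X).ncard : ℤ) - 1)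
    + (M.rk (RXset hdD tlD R X) : ℤ)


/-! The Tanigawa function `b` is monotone and submodular: `|V_X|` and `r_M(R_X)` are a cardinality
and a matroid rank composed with maps `X ↦ V_X`, `X ↦ R_X` that preserve unions. For any
integer-valued monotone submodular `b`, the `b`-sparse sets satisfy the augmentation axiom
(Edmonds). Indeed, if no `y ∈ X' \ X` can be added to the sparse set `X`, then each such `y` is
spanned (`b (insert y T) ≤ b T`) by a tight subset `T` of `X`. Intersecting tight sets have a tight
union, so `y` is spanned by one of the pairwise disjoint maximal tight subsets of `X`. A maximal
tight `T` spans all its `y`'s at once, so sparsity of `X'` bounds their number by `|T \ X'|`;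
summing over `T` gives `|X' \ X| ≤ |X \ X'|`, contradicting `|X| < |X'|`. -/

section Counting

variable {ι κ E : Type*}

theorem ncard_le_ncard_biUnion_of_fiberwise [Finite ι] [Finite E] (D : Set ι) (f : ι → κ)
    (g : κ → Set E) (hg : (f '' D).PairwiseDisjoint g)
    (hfib : ∀ y ∈ D, {z ∈ D | f z = f y}.ncard ≤ (g (f y)).ncard) :
    D.ncard ≤ (⋃ y ∈ D, g (f y)).ncard := by
  classical
  lift D to Finset ι using D.toFinite
  calc (D : Set ι).ncard = ∑ t ∈ D.image f, ({z ∈ D | f z = t} : Finset ι).card := by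
        rw [ncard_coe_finset, Finset.card_eq_sum_card_image f D]
    _ ≤ ∑ t ∈ D.image f, (g t).ncard := by
        refine Finset.sum_le_sum fun t ht => ?_
        obtain ⟨y, hy, rfl⟩ := Finset.mem_image.1 ht
        simpa [← ncard_coe_finset] using hfib y hy
    _ = (⋃ y ∈ (D : Set ι), g (f y)).ncard := by
        rw [← finsum_mem_coe_finset, ← Finite.ncard_biUnion (toFinite _) (fun _ _ => toFinite _)
          (by rwa [Finset.coe_image]), Finset.coe_image, biUnion_image]

end Counting

section Sparse

variable {E : Type*} {b : Set E → ℤ}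

def IsSubmodular (f : Set E → ℤ) : Prop :=
  ∀ A B, f (A ∪ B) + f (A ∩ B) ≤ f A + f B

def IsSparse (b : Set E → ℤ) (X : Set E) : Prop :=
  ∀ Y ⊆ X, Y.Nonempty → (Y.ncard : ℤ) ≤ b Y

def IsTight_s11 (b : Set E → ℤ) (T : Set E) : Prop :=
  T.Nonempty ∧ b T = T.ncard

theorem isSparse_empty (b : Set E → ℤ) : IsSparse b ∅ :=
  fun _ hY hne => absurd (subset_empty_iff.1 hY) hne.ne_empty

theorem IsSparse.anti {X X' : Set E} (h : IsSparse b X') (hXX' : X ⊆ X') : IsSparse b X :=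
  fun Y hY => h Y (hY.trans hXX')

theorem IsSparse.one_le_singleton {X : Set E} (h : IsSparse b X) {y : E} (hy : y ∈ X) :
    1 ≤ b {y} := by
  simpa using h {y} (singleton_subset_iff.2 hy) (singleton_nonempty y)

theorem IsSubmodular.insert_le_of_subset (hb : IsSubmodular b) (hmono : Monotone b)
    {S T : Set E} {y : E} (hST : S ⊆ T) (h : b (insert y S) ≤ b S) : b (insert y T) ≤ b T := by
  have hsub := hb T (insert y S)
  rw [union_insert, union_eq_self_of_subset_right hST] at hsub
  have hS : b S ≤ b (T ∩ insert y S) := hmono (subset_inter hST (subset_insert y S))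
  linarith

theorem IsSubmodular.union_le_of_forall_insert_le (hb : IsSubmodular b) (hmono : Monotone b)
    (T : Set E) {F : Set E} (hF : F.Finite) (h : ∀ z ∈ F, b (insert z T) ≤ b T) :
    b (T ∪ F) ≤ b T := by
  induction F, hF using Set.Finite.induction_on with
  | empty => rw [union_empty]
  | @insert a s _ _ ih =>
    have hsub := hb (T ∪ s) (insert a T)
    have hunion : T ∪ s ∪ insert a T = T ∪ insert a s := by
      rw [union_insert, union_insert, union_right_comm, union_self]
    have hinter : b T ≤ b ((T ∪ s) ∩ insert a T) :=
      hmono (subset_inter subset_union_left (subset_insert a T))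
    have ha := h a (mem_insert a s)
    have hs := ih fun z hz => h z (mem_insert_of_mem a hz)
    rw [hunion] at hsub
    linarith

variable [Finite E]

theorem IsTight_s11.union (hb : IsSubmodular b) {X T₁ T₂ : Set E} (hX : IsSparse b X)
    (h₁ : IsTight_s11 b T₁) (h₂ : IsTight_s11 b T₂) (hT₁ : T₁ ⊆ X) (hT₂ : T₂ ⊆ X)
    (hne : (T₁ ∩ T₂).Nonempty) : IsTight_s11 b (T₁ ∪ T₂) := by
  have hU := hX _ (union_subset hT₁ hT₂) (h₁.1.mono subset_union_left)
  have hI := hX _ (inter_subset_left.trans hT₁) hne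
  have hcard : ((T₁ ∪ T₂).ncard : ℤ) + (T₁ ∩ T₂).ncard = T₁.ncard + T₂.ncard := by
    exact_mod_cast ncard_union_add_ncard_inter T₁ T₂
  refine ⟨h₁.1.mono subset_union_left, ?_⟩
  linarith [hb T₁ T₂, h₁.2, h₂.2]

theorem IsTight_s11.exists_maximal (hb : IsSubmodular b) {X S : Set E} (hX : IsSparse b X)
    (hS : IsTight_s11 b S) (hSX : S ⊆ X) :
    ∃ T, S ⊆ T ∧ T ⊆ X ∧ IsTight_s11 b T ∧
      ∀ T' ⊆ X, IsTight_s11 b T' → (T ∩ T').Nonempty → T' ⊆ T := by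
  obtain ⟨T, hST, hmax⟩ :=
    (toFinite {T | T ⊆ X ∧ IsTight_s11 b T}).exists_le_maximal (a := S) ⟨hSX, hS⟩
  obtain ⟨hTX, hT⟩ := hmax.prop
  refine ⟨T, hST, hTX, hT, fun T' hT'X hT' hne => ?_⟩
  have hU := hmax.eq_of_subset ⟨union_subset hTX hT'X, hT.union hb hX hT' hTX hT'X hne⟩
    subset_union_left
  exact hU ▸ subset_union_right

theorem IsSparse.exists_tight_of_not_isSparse_insert (hmono : Monotone b) {X : Set E} {y : E}
    (hX : IsSparse b X) (hy : 1 ≤ b {y}) (hyX : ¬ IsSparse b (insert y X)) :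
    ∃ S ⊆ X, IsTight_s11 b S ∧ b (insert y S) ≤ b S := by
  simp only [IsSparse, not_forall, not_le] at hyX
  obtain ⟨Y, hYX, hYne, hbY⟩ := hyX
  have hyY : y ∈ Y := by
    by_contra hyY
    exact (hX Y ((subset_insert_iff_of_notMem hyY).1 hYX) hYne).not_gt hbY
  set S := Y \ {y}
  have hSX : S ⊆ X := sdiff_singleton_subset_iff.2 hYX
  have hYS : insert y S = Y := insert_sdiff_self_of_mem hyY
  have hcard : (Y.ncard : ℤ) = S.ncard + 1 := by
    rw [← hYS, ncard_insert_of_notMem (fun h => h.2 rfl), Nat.cast_succ]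
  have hSne : S.Nonempty := by
    rw [nonempty_iff_ne_empty]
    rintro hS
    rw [← hYS, hS, insert_empty_eq] at hbY
    simp only [ncard_singleton, Nat.cast_one] at hbY
    linarith
  have hSb := hX S hSX hSne
  have hSY : b S ≤ b Y := hmono (hYS ▸ subset_insert y S)
  exact ⟨S, hSX, ⟨hSne, by linarith⟩, by rw [hYS]; linarith⟩

theorem IsSparse.ncard_le_ncard_sdiff_of_isTight (hmono : Monotone b) {X' T F : Set E}
    (hX' : IsSparse b X') (hT : IsTight_s11 b T) (hF : F ⊆ X' \ T) (hFT : b (T ∪ F) ≤ b T) :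
    F.ncard ≤ (T \ X').ncard := by
  obtain rfl | hFne := F.eq_empty_or_nonempty
  · simp
  have hZ := hX' (X' ∩ T ∪ F) (union_subset inter_subset_left (hF.trans sdiff_subset))
    (hFne.mono subset_union_right)
  have hbZ : b (X' ∩ T ∪ F) ≤ b (T ∪ F) := hmono (union_subset_union_left F inter_subset_right)
  have hZcard : (X' ∩ T ∪ F).ncard = (T ∩ X').ncard + F.ncard := by
    rw [inter_comm, ncard_union_eq ((disjoint_sdiff_left.mono_left hF).symm.mono_left
      inter_subset_left)]
  have hTcard := ncard_inter_add_ncard_sdiff_eq_ncard T X'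
  have hbT := hT.2
  omega

theorem IsSparse.exists_insert_of_ncard_lt (hmono : Monotone b) (hb : IsSubmodular b)
    {X X' : Set E} (hX : IsSparse b X) (hX' : IsSparse b X') (hlt : X.ncard < X'.ncard) :
    ∃ y ∈ X' \ X, IsSparse b (insert y X) := by
  by_contra! hno
  have hspan : ∀ y ∈ X' \ X, ∃ T ⊆ X, IsTight_s11 b T ∧ b (insert y T) ≤ b T ∧
      ∀ T' ⊆ X, IsTight_s11 b T' → (T ∩ T').Nonempty → T' ⊆ T := by
    intro y hy
    obtain ⟨S, hSX, hS, hyS⟩ :=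
      hX.exists_tight_of_not_isSparse_insert hmono (hX'.one_le_singleton hy.1) (hno y hy)
    obtain ⟨T, hST, hTX, hT, hmax⟩ := hS.exists_maximal hb hX hSX
    exact ⟨T, hTX, hT, hb.insert_le_of_subset hmono hST hyS, hmax⟩
  choose! T hTX hT hyT hmax using hspan
  have hdisj : (T '' (X' \ X)).PairwiseDisjoint (· \ X') := by
    rintro _ ⟨y, hy, rfl⟩ _ ⟨z, hz, rfl⟩ hne
    refine Disjoint.mono sdiff_subset sdiff_subset ?_
    by_contra h
    rw [not_disjoint_iff_nonempty_inter] at h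
    exact hne (subset_antisymm (hmax z hz _ (hTX y hy) (hT y hy) (inter_comm (T y) _ ▸ h))
      (hmax y hy _ (hTX z hz) (hT z hz) h))
  have hfib : ∀ y ∈ X' \ X, {z ∈ X' \ X | T z = T y}.ncard ≤ (T y \ X').ncard := by
    intro y hy
    refine hX'.ncard_le_ncard_sdiff_of_isTight hmono (hT y hy)
      (fun z hz => ⟨hz.1.1, fun hzT => hz.1.2 (hTX y hy hzT)⟩) ?_
    exact hb.union_le_of_forall_insert_le hmono _ (toFinite _) fun z hz => hz.2 ▸ hyT z hz.1
  have hcount := ncard_le_ncard_biUnion_of_fiberwise (X' \ X) T (· \ X') hdisj hfib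
  have hcover : (⋃ y ∈ X' \ X, T y \ X').ncard ≤ (X \ X').ncard :=
    ncard_le_ncard (iUnion₂_subset fun y hy => sdiff_subset_sdiff_left (hTX y hy))
  rw [ncard_lt_ncard_iff_ncard_sdiff_lt_ncard_sdiff] at hlt
  omega

end Sparse

section UnionPreserving

variable {ι α : Type*}

theorem monotone_of_map_union {φ : Set ι → Set α} (hφ : ∀ A B, φ (A ∪ B) = φ A ∪ φ B) :
    Monotone φ := fun A B h => by
  rw [← union_eq_self_of_subset_left h, hφ]
  exact subset_union_left

theorem IsSubmodular.comp_of_map_union {f : Set α → ℤ} (hmono : Monotone f) (hf : IsSubmodular f)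
    {φ : Set ι → Set α} (hφ : ∀ A B, φ (A ∪ B) = φ A ∪ φ B) : IsSubmodular (f ∘ φ) := by
  intro A B
  have hinter : f (φ (A ∩ B)) ≤ f (φ A ∩ φ B) := hmono (subset_inter
    (monotone_of_map_union hφ inter_subset_left) (monotone_of_map_union hφ inter_subset_right))
  simp only [Function.comp, hφ]
  linarith [hf (φ A) (φ B)]

theorem monotone_ncard [Finite α] : Monotone fun X : Set α => (X.ncard : ℤ) :=
  fun _ _ h => Nat.cast_le.2 (ncard_le_ncard h)

theorem isSubmodular_ncard [Finite α] : IsSubmodular fun X : Set α => (X.ncard : ℤ) :=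
  fun A B => by
    beta_reduce
    exact_mod_cast (ncard_union_add_ncard_inter A B).le

end UnionPreserving

theorem RankFn.monotone_rk {α : Type} (M : RankFn α) : Monotone fun X => (M.rk X : ℤ) :=
  fun X Y h => Nat.cast_le.2 (M.mono X Y h)

theorem RankFn.isSubmodular_rk {α : Type} (M : RankFn α) : IsSubmodular fun X => (M.rk X : ℤ) :=
  fun X Y => by
    beta_reduce
    exact_mod_cast M.submod X Y

section Tanigawa

variable {α δ ε : Type} (hdD : δ → α) (tlD : δ → Set α) (vE : ε → Set α) (V R : Set α)
  (M : RankFn α)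

theorem VXset_union (A B : Set (δ ⊕ ε)) :
    VXset hdD tlD vE V (A ∪ B) = VXset hdD tlD vE V A ∪ VXset hdD tlD vE V B := by
  rw [VXset, biUnion_union, inter_union_distrib_left]
  rfl

theorem RXset_union (A B : Set (δ ⊕ ε)) :
    RXset hdD tlD R (A ∪ B) = RXset hdD tlD R A ∪ RXset hdD tlD R B := by
  have hdy : {a : δ | Sum.inl a ∈ A ∪ B} = {a | Sum.inl a ∈ A} ∪ {a | Sum.inl a ∈ B} := rfl
  rw [RXset, hdy, biUnion_union, inter_union_distrib_left]
  rfl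

variable [Finite α]

theorem bTan_monotone : Monotone (bTan hdD tlD vE V R M) := by
  intro A B h
  have hV := monotone_ncard (monotone_of_map_union (VXset_union hdD tlD vE V) h)
  have hR := M.monotone_rk (monotone_of_map_union (RXset_union hdD tlD R) h)
  have hc : (0 : ℤ) ≤ M.rk R := by positivity
  simp only [bTan] at hV hR ⊢
  nlinarith

theorem bTan_isSubmodular : IsSubmodular (bTan hdD tlD vE V R M) := by
  intro A B
  have hV := isSubmodular_ncard.comp_of_map_union monotone_ncard (VXset_union hdD tlD vE V) A B
  have hR := M.isSubmodular_rk.comp_of_map_union M.monotone_rk (RXset_union hdD tlD R) A B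
  have hc : (0 : ℤ) ≤ M.rk R := by positivity
  simp only [bTan, Function.comp] at hV hR ⊢
  nlinarith

end Tanigawa

theorem tanigawa_matroid_general
    {α δ ε : Type} [Fintype α] [Fintype δ] [Fintype ε]
    (V R : Set α) (hdD : δ → α) (tlD : δ → Set α) (vE : ε → Set α)
    (M : RankFn α) :
    ∀ I : Set (Set (δ ⊕ ε)),
      I = {X : Set (δ ⊕ ε) | ∀ Y ⊆ X, Y.Nonempty →
            (Y.ncard : ℤ) ≤ bTan hdD tlD vE V R M Y} →
      ((∅ : Set (δ ⊕ ε)) ∈ I ∧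
       (∀ X X' : Set (δ ⊕ ε), X ⊆ X' → X' ∈ I → X ∈ I) ∧
       (∀ X ∈ I, ∀ X' ∈ I, X.ncard < X'.ncard →
          ∃ y ∈ X' \ X, insert y X ∈ I)) := by
  rintro _ rfl
  exact ⟨isSparse_empty _, fun X X' h hX' => IsSparse.anti hX' h,
    fun X hX X' hX' hlt => IsSparse.exists_insert_of_ncard_lt (bTan_monotone hdD tlD vE V R M)
      (bTan_isSubmodular hdD tlD vE V R M) hX hX' hlt⟩

/-- The Tanigawa matroid: the family `{X ⊆ A∪E : b(Y) ≥ |Y| for all nonempty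
Y ⊆ X}` induced by the Tanigawa function is the family of independent sets of a
matroid on the edge set of a simply matroid-rooted mixed hypergraph. -/
theorem tanigawa_matroid
    {α δ ε : Type} [Fintype α] [Fintype δ] [Fintype ε]
    (V R : Set α) (hdD : δ → α) (tlD : δ → Set α) (vE : ε → Set α)
    (hpart : V ∪ R = Set.univ) (hdisj : Disjoint V R)
    (htail : ∀ a : δ, (tlD a).Nonempty)
    (hheadtail : ∀ a : δ, hdD a ∉ tlD a)
    (hhyp2 : ∀ e : ε, 2 ≤ (vE e).ncard)
    (hrootA : ∀ a : δ, hdD a ∉ R)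
    (hrootE : ∀ e : ε, vE e ∩ R = ∅)
    (hleave : ∀ a : δ, ∀ r ∈ R, r ∈ tlD a → tlD a = {r})
    (hsimple : ∀ r ∈ R, {a : δ | r ∈ tlD a}.ncard ≤ 1)
    (M : RankFn α) :
    ∀ I : Set (Set (δ ⊕ ε)),
      I = {X : Set (δ ⊕ ε) | ∀ Y ⊆ X, Y.Nonempty →
            (Y.ncard : ℤ) ≤ bTan hdD tlD vE V R M Y} →
      ((∅ : Set (δ ⊕ ε)) ∈ I ∧
       (∀ X X' : Set (δ ⊕ ε), X ⊆ X' → X' ∈ I → X ∈ I) ∧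
       (∀ X ∈ I, ∀ X' ∈ I, X.ncard < X'.ncard →
          ∃ y ∈ X' \ X, insert y X ∈ I)) :=
  tanigawa_matroid_general V R hdD tlD vE M
end
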